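/- arXiv:math/0507179 — 3 statements merged into one kernel-verified Lean document; each statement's English description precedes it below -/
import Mathlib

section
/- Let V be a finite-dimensional real inner product space. The antisymmetrization map Alt₁₂ : Λ¹V ⊗ Λ²V → Λ²V ⊗ Λ¹V, defined by antisymmetrizing a tensor in Λ¹V ⊗ Λ¹V ⊗ Λ¹V over the first two indices (where Λ²V ⊂ Λ¹V ⊗ Λ¹V), is a linear isomorphism. -/
open TensorProduct

/-- The antisymmetrizer `σ : V ⊗ V → V ⊗ V`, `y ⊗ z ↦ y ⊗ z - z ⊗ y`.
Its range is (a model for) `Λ²V ⊆ Λ¹V ⊗ Λ¹V`. -/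
noncomputable def altTwo (V : Type*) [AddCommGroup V] [Module ℝ V] :
    V ⊗[ℝ] V →ₗ[ℝ] V ⊗[ℝ] V :=
  LinearMap.id - (TensorProduct.comm ℝ V V).toLinearMap

/-- `Λ²V`, realized as the antisymmetric part of `V ⊗ V`. -/
noncomputable def LambdaTwo (V : Type*) [AddCommGroup V] [Module ℝ V] :
    Submodule ℝ (V ⊗[ℝ] V) :=
  LinearMap.range (altTwo V)

/-- The map `Alt₁₂ : Λ¹V ⊗ Λ²V → Λ²V ⊗ Λ¹V`, antisymmetrizing a tensor in
`Λ¹V ⊗ Λ¹V ⊗ Λ¹V` over its first two indices: on `x ⊗ (y ∧ z)` it gives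
`(x ∧ y) ⊗ z - (x ∧ z) ⊗ y` (where `a ∧ b = a ⊗ b - b ⊗ a`). -/
noncomputable def Alt12 (V : Type*) [AddCommGroup V] [Module ℝ V] :
    V ⊗[ℝ] (LambdaTwo V) →ₗ[ℝ] (LambdaTwo V) ⊗[ℝ] V :=
  (LinearMap.rTensor V (altTwo V).rangeRestrict).comp
    ((TensorProduct.assoc ℝ V V V).symm.toLinearMap.comp
      (LinearMap.lTensor V (LambdaTwo V).subtype))

section Aux

variable (V : Type*) [AddCommGroup V] [Module ℝ V]

/-- Transposition of the first two slots of `(V ⊗ V) ⊗ V`. -/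
noncomputable def tau12 : (V ⊗[ℝ] V) ⊗[ℝ] V →ₗ[ℝ] (V ⊗[ℝ] V) ⊗[ℝ] V :=
  LinearMap.rTensor V (TensorProduct.comm ℝ V V).toLinearMap

/-- Transposition of the last two slots of `(V ⊗ V) ⊗ V`. -/
noncomputable def tau23 : (V ⊗[ℝ] V) ⊗[ℝ] V →ₗ[ℝ] (V ⊗[ℝ] V) ⊗[ℝ] V :=
  (TensorProduct.assoc ℝ V V V).symm.toLinearMap ∘ₗ
    (LinearMap.lTensor V (TensorProduct.comm ℝ V V).toLinearMap) ∘ₗ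
      (TensorProduct.assoc ℝ V V V).toLinearMap

@[simp] lemma tau12_tmul (x y z : V) :
    tau12 V ((x ⊗ₜ[ℝ] y) ⊗ₜ[ℝ] z) = (y ⊗ₜ[ℝ] x) ⊗ₜ[ℝ] z := by
  simp [tau12]

@[simp] lemma tau23_tmul (x y z : V) :
    tau23 V ((x ⊗ₜ[ℝ] y) ⊗ₜ[ℝ] z) = (x ⊗ₜ[ℝ] z) ⊗ₜ[ℝ] y := by
  simp [tau23]

lemma rTensor_altTwo :
    LinearMap.rTensor V (altTwo V) = LinearMap.id - tau12 V := by
  apply TensorProduct.ext_threefold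
  intro x y z
  simp [altTwo, sub_tmul]

lemma assoc_symm_lTensor_altTwo :
    (TensorProduct.assoc ℝ V V V).symm.toLinearMap ∘ₗ
        LinearMap.lTensor V (altTwo V) ∘ₗ (TensorProduct.assoc ℝ V V V).toLinearMap =
      LinearMap.id - tau23 V := by
  apply TensorProduct.ext_threefold
  intro x y z
  simp [altTwo, tmul_sub, sub_tmul]

lemma comm_comm (y : V ⊗[ℝ] V) :
    (TensorProduct.comm ℝ V V) ((TensorProduct.comm ℝ V V) y) = y := by
  have h : ((TensorProduct.comm ℝ V V).toLinearMap ∘ₗ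
      (TensorProduct.comm ℝ V V).toLinearMap) = LinearMap.id :=
    TensorProduct.ext' (fun a b => by simp)
  simpa using DFunLike.congr_fun h y

lemma rho_cube (w : (V ⊗[ℝ] V) ⊗[ℝ] V) :
    tau12 V (tau23 V (tau12 V (tau23 V (tau12 V (tau23 V w))))) = w := by
  have h : (tau12 V ∘ₗ tau23 V) ∘ₗ (tau12 V ∘ₗ tau23 V) ∘ₗ (tau12 V ∘ₗ tau23 V) =
      LinearMap.id := by
    apply TensorProduct.ext_threefold
    intro x y z
    simp
  simpa using DFunLike.congr_fun h w

lemma altTwo_comp_subtype :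
    (altTwo V) ∘ₗ (LambdaTwo V).subtype = (2 : ℝ) • (LambdaTwo V).subtype := by
  ext ⟨w, hw⟩
  obtain ⟨y, rfl⟩ := hw
  show altTwo V (altTwo V y) = (2 : ℝ) • altTwo V y
  simp only [altTwo, LinearMap.sub_apply, LinearMap.id_apply, LinearEquiv.coe_coe,
    map_sub]
  rw [_root_.comm_comm]
  module

lemma Alt12_injective : Function.Injective (Alt12 V) := by
  rw [injective_iff_map_eq_zero]
  intro t ht
  set u : V ⊗[ℝ] (V ⊗[ℝ] V) := LinearMap.lTensor V (LambdaTwo V).subtype t with hu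
  set v : (V ⊗[ℝ] V) ⊗[ℝ] V := (TensorProduct.assoc ℝ V V V).symm u with hv
  -- τ₁₂ v = v
  have h12 : tau12 V v = v := by
    have h0 : LinearMap.rTensor V (altTwo V) v = 0 := by
      have : LinearMap.rTensor V (LambdaTwo V).subtype
          (LinearMap.rTensor V (altTwo V).rangeRestrict v) = 0 := by
        have hA : LinearMap.rTensor V (altTwo V).rangeRestrict v = Alt12 V t := rfl
        rw [hA, ht, map_zero]
      have hsc : (LambdaTwo V).subtype ∘ₗ (altTwo V).rangeRestrict = altTwo V :=
        LinearMap.subtype_comp_codRestrict _ _ _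
      rw [← hsc]
      exact (LinearMap.rTensor_comp_apply ..).trans this
    rw [rTensor_altTwo] at h0
    have := sub_eq_zero.mp (by simpa using h0)
    simpa using this.symm
  -- τ₂₃ v = -v
  have h23 : tau23 V v = -v := by
    have h2u : LinearMap.lTensor V (altTwo V) u = (2 : ℝ) • u := by
      rw [hu, ← LinearMap.comp_apply, ← LinearMap.lTensor_comp, altTwo_comp_subtype,
        LinearMap.lTensor_smul, LinearMap.smul_apply]
    have h' : ((TensorProduct.assoc ℝ V V V).symm.toLinearMap ∘ₗ
        LinearMap.lTensor V (altTwo V) ∘ₗ (TensorProduct.assoc ℝ V V V).toLinearMap) v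
          = (2 : ℝ) • v := by
      have hval : (TensorProduct.assoc ℝ V V V) v = u := by
        simp [hv]
      simp only [LinearMap.comp_apply, LinearEquiv.coe_coe, hval, h2u, map_smul, hv,
        LinearEquiv.apply_symm_apply]
    rw [assoc_symm_lTensor_altTwo] at h'
    have h'' : v - tau23 V v = (2 : ℝ) • v := by simpa using h'
    have : tau23 V v = v - (2 : ℝ) • v := by linear_combination (norm := module) -h''
    rw [this]; module
  -- v = 0
  have hv0 : v = 0 := by
    have hρ : tau12 V (tau23 V v) = -v := by rw [h23, map_neg, h12]
    have hvneg : v = -v := by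
      calc v = tau12 V (tau23 V (tau12 V (tau23 V (tau12 V (tau23 V v))))) :=
            (rho_cube V v).symm
        _ = -v := by rw [hρ, map_neg, map_neg, hρ, neg_neg, hρ]
    have h2 : (2 : ℝ) • v = 0 := by
      rw [two_smul]
      nth_rewrite 1 [hvneg]
      simp
    rcases smul_eq_zero.mp h2 with h | h
    · norm_num at h
    · exact h
  -- conclude
  have hu0 : u = 0 := by
    have := congrArg (TensorProduct.assoc ℝ V V V) hv0
    simpa [hv] using this
  have hinj : Function.Injective (LinearMap.lTensor V (LambdaTwo V).subtype) :=
    Module.Flat.lTensor_preserves_injective_linearMap _ (LambdaTwo V).injective_subtype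
  exact hinj (by simpa [hu] using hu0)

end Aux

/-!
STATEMENT 1: For a finite-dimensional real inner product space `V`, the
antisymmetrization map `Alt₁₂ : Λ¹V ⊗ Λ²V → Λ²V ⊗ Λ¹V` is a linear isomorphism.
-/
theorem stmt_1 (V : Type*) [NormedAddCommGroup V] [InnerProductSpace ℝ V]
    [FiniteDimensional ℝ V] :
    Function.Bijective (Alt12 V) := by
  have hinj := Alt12_injective V
  have hfd : FiniteDimensional ℝ (LambdaTwo V) := inferInstance
  have hfr : Module.finrank ℝ (V ⊗[ℝ] (LambdaTwo V)) =
      Module.finrank ℝ ((LambdaTwo V) ⊗[ℝ] V) := by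
    rw [Module.finrank_tensorProduct, Module.finrank_tensorProduct, mul_comm]
  exact ⟨hinj, (LinearMap.injective_iff_surjective_of_finrank_eq_finrank hfr
    (K := ℝ) (V := V ⊗[ℝ] LambdaTwo V) (V₂ := LambdaTwo V ⊗[ℝ] V) (f := Alt12 V)).mp hinj⟩
end

section
/- Let (M, I) be an almost complex 6-manifold with Hermitian form ω and Ω a (3,0)-form such that dω = 3λ Re Ω for a real constant λ ≠ 0. Then d^{0,1}Ω = 0, d^{1,0}Ω̄ = 0, and dΩ = d^{-1,2}Ω = -d^{2,-1}Ω̄; in particular dΩ is a (2,2)-form. -/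
/-!
Applying `d` to `dω = (3λ/2)(Ω + Ω̄)` and using `d² = 0`, `λ ≠ 0` gives `dΩ = -dΩ̄`.
For bidegree reasons `dΩ` has components only in `(3,1)` and `(2,2)`, while `dΩ̄` has
components only in `(2,2)` and `(1,3)`; comparing the two sides kills the `(3,1)` and `(1,3)`
parts, so `dΩ = d^{-1,2}Ω = -d^{2,-1}Ω̄` is of type `(2,2)`.
-/

theorem LinearMap.map_eq_zero_of_map_eq_smul {K M : Type*} [DivisionRing K] [AddCommGroup M]
    [Module K M] (d : M →ₗ[K] M) (hd2 : ∀ x, d (d x) = 0) {c : K} (hc : c ≠ 0) {x y : M}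
    (h : d y = c • x) : d x = 0 := by
  have := hd2 y
  rwa [h, map_smul, smul_eq_zero, or_iff_right hc] at this

namespace Bigraded

variable {A : Type*} [AddCommGroup A] [Module ℂ A] {Ω : ℤ → ℤ → Submodule ℂ A}
  {π : ℤ → ℤ → (A →ₗ[ℂ] A)} (hπmem : ∀ p q (x : A), π p q x ∈ Ω p q)

include hπmem

theorem proj_eq_zero_of_eq_bot {p q : ℤ} (h : Ω p q = ⊥) (x : A) : π p q x = 0 := by
  simpa [h] using hπmem p q x

theorem proj_eq_zero_of_eq_proj_add_proj
    (hπorth : ∀ p q p' q', (p ≠ p' ∨ q ≠ q') → ∀ x ∈ Ω p q, π p' q' x = 0)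
    {a b a' b' p q : ℤ} (hab : a ≠ p ∨ b ≠ q) (hab' : a' ≠ p ∨ b' ≠ q) {x : A}
    (hx : x = π a b x + π a' b' x) : π p q x = 0 := by
  rw [hx, map_add, hπorth a b p q hab _ (hπmem a b _), hπorth a' b' p q hab' _ (hπmem a' b' _),
    add_zero]

variable (hdim : ∀ p q : ℤ, (p < 0 ∨ q < 0 ∨ 3 < p ∨ 3 < q) → Ω p q = ⊥) {d : A →ₗ[ℂ] A}
  (hd4 : ∀ p q, ∀ α ∈ Ω p q, d α =
    π (p + 2) (q - 1) (d α) + π (p + 1) q (d α) + π p (q + 1) (d α) + π (p - 1) (q + 2) (d α))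

include hdim hd4

theorem d_eq_of_mem_three_zero {α : A} (hα : α ∈ Ω 3 0) :
    d α = π 3 1 (d α) + π 2 2 (d α) := by
  have h := hd4 3 0 α hα
  norm_num only at h
  rwa [proj_eq_zero_of_eq_bot hπmem (hdim 5 (-1) (by norm_num)),
    proj_eq_zero_of_eq_bot hπmem (hdim 4 0 (by norm_num)), zero_add, zero_add] at h

theorem d_eq_of_mem_zero_three {α : A} (hα : α ∈ Ω 0 3) :
    d α = π 2 2 (d α) + π 1 3 (d α) := by
  have h := hd4 0 3 α hα
  norm_num only at h
  rwa [proj_eq_zero_of_eq_bot hπmem (hdim 0 4 (by norm_num)),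
    proj_eq_zero_of_eq_bot hπmem (hdim (-1) 5 (by norm_num)), add_zero, add_zero] at h

end Bigraded

theorem stmt_7_general {A : Type*} [Ring A] [Algebra ℂ A]
    (Ω : ℤ → ℤ → Submodule ℂ A)
    (π : ℤ → ℤ → (A →ₗ[ℂ] A))
    (d : A →ₗ[ℂ] A)
    (σ : A →ₗ[ℝ] A)
    -- the manifold has complex dimension 3:
    (hdim : ∀ p q : ℤ, (p < 0 ∨ q < 0 ∨ 3 < p ∨ 3 < q) → Ω p q = ⊥)
    -- bidegree projections:
    (hπmem : ∀ p q (x : A), π p q x ∈ Ω p q)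
    (hπorth : ∀ p q p' q', (p ≠ p' ∨ q ≠ q') → ∀ x ∈ Ω p q, π p' q' x = 0)
    -- the exterior differential has the four components d^{2,-1}, d^{1,0}, d^{0,1}, d^{-1,2}:
    (hd4 : ∀ p q, ∀ α ∈ Ω p q, d α =
      π (p + 2) (q - 1) (d α) + π (p + 1) q (d α) + π p (q + 1) (d α) + π (p - 1) (q + 2) (d α))
    (hd2 : ∀ x : A, d (d x) = 0)
    -- complex conjugation:
    (hσΩ : ∀ p q, ∀ x ∈ Ω p q, σ x ∈ Ω q p)
    -- the SU(3)-structure data: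
    (ω Ωf : A) (hΩf : Ωf ∈ Ω 3 0)
    (lam : ℝ) (hlam : lam ≠ 0)
    (hdω : d ω = (((3 : ℂ) * (lam : ℂ)) / 2) • (Ωf + σ Ωf)) :
    π 3 1 (d Ωf) = 0 ∧
    π 1 3 (d (σ Ωf)) = 0 ∧
    d Ωf = π 2 2 (d Ωf) ∧
    d Ωf = -π 2 2 (d (σ Ωf)) ∧
    d Ωf ∈ Ω 2 2 := by
  have hc : ((3 : ℂ) * (lam : ℂ)) / 2 ≠ 0 := by simp [hlam]
  have hdΩ := Bigraded.d_eq_of_mem_three_zero hπmem hdim hd4 hΩf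
  have hdΩbar := Bigraded.d_eq_of_mem_zero_three hπmem hdim hd4 (hσΩ 3 0 Ωf hΩf)
  have hsum : d Ωf + d (σ Ωf) = 0 := by
    rw [← map_add]
    exact d.map_eq_zero_of_map_eq_smul hd2 hc hdω
  have h31 : π 3 1 (d Ωf) = 0 := by
    rw [eq_neg_of_add_eq_zero_left hsum, map_neg,
      Bigraded.proj_eq_zero_of_eq_proj_add_proj hπmem hπorth (by norm_num) (by norm_num) hdΩbar,
      neg_zero]
  have h13 : π 1 3 (d (σ Ωf)) = 0 := by
    rw [eq_neg_of_add_eq_zero_right hsum, map_neg,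
      Bigraded.proj_eq_zero_of_eq_proj_add_proj hπmem hπorth (by norm_num) (by norm_num) hdΩ,
      neg_zero]
  have h22 : d Ωf = π 2 2 (d Ωf) := by conv_lhs => rw [hdΩ, h31, zero_add]
  refine ⟨h31, h13, h22, ?_, h22 ▸ hπmem 2 2 (d Ωf)⟩
  conv_lhs => rw [eq_neg_of_add_eq_zero_left hsum, hdΩbar, h13, add_zero]

theorem stmt_7 {A : Type*} [Ring A] [Algebra ℂ A]
    (Ω : ℤ → ℤ → Submodule ℂ A)
    (π : ℤ → ℤ → (A →ₗ[ℂ] A))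
    (d : A →ₗ[ℂ] A)
    (σ : A →ₗ[ℝ] A)
    -- the manifold has complex dimension 3:
    (hdim : ∀ p q : ℤ, (p < 0 ∨ q < 0 ∨ 3 < p ∨ 3 < q) → Ω p q = ⊥)
    -- bidegree projections:
    (hπmem : ∀ p q (x : A), π p q x ∈ Ω p q)
    (hπid : ∀ p q, ∀ x ∈ Ω p q, π p q x = x)
    (hπorth : ∀ p q p' q', (p ≠ p' ∨ q ≠ q') → ∀ x ∈ Ω p q, π p' q' x = 0)
    -- the exterior differential has the four components d^{2,-1}, d^{1,0}, d^{0,1}, d^{-1,2}: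
    (hd4 : ∀ p q, ∀ α ∈ Ω p q, d α =
      π (p + 2) (q - 1) (d α) + π (p + 1) q (d α) + π p (q + 1) (d α) + π (p - 1) (q + 2) (d α))
    (hd2 : ∀ x : A, d (d x) = 0)
    -- complex conjugation:
    (hσσ : ∀ x, σ (σ x) = x)
    (hσI : ∀ x : A, σ (Complex.I • x) = -(Complex.I • σ x))
    (hσΩ : ∀ p q, ∀ x ∈ Ω p q, σ x ∈ Ω q p)
    (hσd : ∀ x, σ (d x) = d (σ x))
    -- the SU(3)-structure data:
    (ω Ωf : A) (hω : ω ∈ Ω 1 1) (hωreal : σ ω = ω) (hΩf : Ωf ∈ Ω 3 0)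
    (lam : ℝ) (hlam : lam ≠ 0)
    (hdω : d ω = (((3 : ℂ) * (lam : ℂ)) / 2) • (Ωf + σ Ωf)) :
    π 3 1 (d Ωf) = 0 ∧
    π 1 3 (d (σ Ωf)) = 0 ∧
    d Ωf = π 2 2 (d Ωf) ∧
    d Ωf = -π 2 2 (d (σ Ωf)) ∧
    d Ωf ∈ Ω 2 2 :=
  stmt_7_general Ω π d σ hdim hπmem hπorth hd4 hd2 hσΩ ω Ωf hΩf lam hlam hdω
end

section
/- Let (V, ω) be a 2n-dimensional real symplectic vector space (ω a nondegenerate 2-form) with n ≥ 1. Then the map L^{n-1} : Λ¹V* → Λ^{2n-1}V*, η ↦ η ∧ ω^{n-1}, is a linear isomorphism. -/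
set_option synthInstance.maxHeartbeats 1000000
set_option maxHeartbeats 2000000
open ExteriorAlgebra

namespace Stmt15Aux

variable {M : Type*} [AddCommGroup M] [Module ℝ M]

/-- contraction on the exterior algebra -/
noncomputable abbrev ctr (d : Module.Dual ℝ M) :
    ExteriorAlgebra ℝ M →ₗ[ℝ] ExteriorAlgebra ℝ M :=
  CliffordAlgebra.contractLeft (Q := (0 : QuadraticForm ℝ M)) d

lemma anticomm (x y : M) : ι ℝ x * ι ℝ y = -(ι ℝ y * ι ℝ x) :=
  eq_neg_of_add_eq_zero_left (ι_add_mul_swap x y)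

lemma ctr_iota (d : Module.Dual ℝ M) (x : M) :
    ctr d (ι ℝ x) = algebraMap ℝ _ (d x) :=
  CliffordAlgebra.contractLeft_ι _ _ _

lemma ctr_iota_mul (d : Module.Dual ℝ M) (a : M) (x : ExteriorAlgebra ℝ M) :
    ctr d (ι ℝ a * x) = d a • x - ι ℝ a * ctr d x :=
  CliffordAlgebra.contractLeft_ι_mul _ _ _

lemma comm_iota {ω : ExteriorAlgebra ℝ M}
    (hω : ω ∈ LinearMap.range (ι ℝ : M →ₗ[ℝ] ExteriorAlgebra ℝ M) ^ 2) (y : M) :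
    ω * ι ℝ y = ι ℝ y * ω := by
  rw [pow_two] at hω
  refine Submodule.mul_induction_on hω ?_ ?_
  · rintro _ ⟨a, rfl⟩ _ ⟨b, rfl⟩
    rw [mul_assoc, anticomm b y, mul_neg, ← mul_assoc, anticomm a y, neg_mul, neg_neg,
      mul_assoc]
  · intro x y' hx hy'
    rw [add_mul, mul_add, hx, hy']

lemma ctr_mul_mem (d : Module.Dual ℝ M) {ω : ExteriorAlgebra ℝ M}
    (hω : ω ∈ LinearMap.range (ι ℝ : M →ₗ[ℝ] ExteriorAlgebra ℝ M) ^ 2)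
    (x : ExteriorAlgebra ℝ M) :
    ctr d (ω * x) = ctr d ω * x + ω * ctr d x := by
  rw [pow_two] at hω
  refine Submodule.mul_induction_on hω ?_ ?_
  · rintro _ ⟨a, rfl⟩ _ ⟨b, rfl⟩
    rw [mul_assoc, ctr_iota_mul, ctr_iota_mul, ctr_iota_mul, ctr_iota]
    have hba : ι ℝ a * algebraMap ℝ _ (d b) = d b • ι ℝ a := by
      rw [← Algebra.commutes, ← Algebra.smul_def]
    rw [hba]
    simp only [mul_sub, sub_mul, smul_mul_assoc, mul_smul_comm, mul_assoc]
    abel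
  · intro u v hu hv
    simp only [add_mul, map_add, hu, hv]
    abel

lemma ctr_mem_range (d : Module.Dual ℝ M) {ω : ExteriorAlgebra ℝ M}
    (hω : ω ∈ LinearMap.range (ι ℝ : M →ₗ[ℝ] ExteriorAlgebra ℝ M) ^ 2) :
    ctr d ω ∈ LinearMap.range (ι ℝ : M →ₗ[ℝ] ExteriorAlgebra ℝ M) := by
  rw [pow_two] at hω
  refine Submodule.mul_induction_on hω ?_ ?_
  · rintro _ ⟨a, rfl⟩ _ ⟨b, rfl⟩
    rw [ctr_iota_mul, ctr_iota]
    have hba : ι ℝ a * algebraMap ℝ _ (d b) = d b • ι ℝ a := by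
      rw [← Algebra.commutes, ← Algebra.smul_def]
    rw [hba]
    exact sub_mem (Submodule.smul_mem _ _ ⟨b, rfl⟩) (Submodule.smul_mem _ _ ⟨a, rfl⟩)
  · intro u v hu hv
    rw [map_add]
    exact add_mem hu hv

lemma ctr_pow (d : Module.Dual ℝ M) {ω : ExteriorAlgebra ℝ M}
    (hω : ω ∈ LinearMap.range (ι ℝ : M →ₗ[ℝ] ExteriorAlgebra ℝ M) ^ 2) (j : ℕ) :
    ctr d (ω ^ (j + 1)) = (j + 1) • (ctr d ω * ω ^ j) := by
  induction j with
  | zero => simp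
  | succ j ih =>
    obtain ⟨a, ha⟩ := ctr_mem_range d hω
    have hcomm : ω * ctr d ω = ctr d ω * ω := by rw [← ha]; exact comm_iota hω a
    rw [pow_succ' ω (j + 1), ctr_mul_mem d hω, ih, mul_smul_comm, ← mul_assoc, hcomm,
      mul_assoc, ← pow_succ' ω j]
    rw [succ_nsmul (ctr d ω * ω ^ (j + 1)) (j + 1), succ_nsmul (ctr d ω * ω ^ (j + 1)) j]
    abel

lemma key_zero (η a : M) (Z : ExteriorAlgebra ℝ M) :
    ι ℝ η * (ι ℝ a * (ι ℝ η * (ι ℝ a * Z))) = 0 := by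
  have h1 : ι ℝ a * (ι ℝ η * (ι ℝ a * Z)) = -(ι ℝ η * (ι ℝ a * (ι ℝ a * Z))) := by
    rw [← mul_assoc, anticomm a η, neg_mul, mul_assoc]
  rw [h1, mul_neg, ← mul_assoc, ι_sq_zero, zero_mul, neg_zero]

lemma core {n : ℕ} (hn : 1 ≤ n) (ω : ExteriorAlgebra ℝ M)
    (hω : ω ∈ LinearMap.range (ι ℝ : M →ₗ[ℝ] ExteriorAlgebra ℝ M) ^ 2)
    (hnd : ω ^ n ≠ 0) (η : M) (d : Module.Dual ℝ M) (hdη : d η ≠ 0)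
    (h : ι ℝ η * ω ^ (n - 1) = 0) : False := by
  obtain ⟨k, rfl⟩ : ∃ k, n = k + 1 := ⟨n - 1, by omega⟩
  rw [Nat.add_sub_cancel] at h
  rcases Nat.eq_zero_or_pos k with hk | hk
  · subst hk
    rw [pow_zero, mul_one] at h
    exact hdη (by rw [(ι_eq_zero_iff (R := ℝ) η).mp h, map_zero])
  obtain ⟨i, rfl⟩ : ∃ i, k = i + 1 := ⟨k - 1, by omega⟩
  obtain ⟨a, ha⟩ := ctr_mem_range d hω
  have h2 : d η • ω ^ (i + 1) = ι ℝ η * ((i + 1) • (ctr d ω * ω ^ i)) := by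
    have h' := congrArg (ctr d) h
    rw [map_zero, ctr_iota_mul, ctr_pow d hω i] at h'
    exact sub_eq_zero.mp h'
  set c : ℝ := (d η)⁻¹ * ((i + 1 : ℕ) : ℝ) with hc
  have h3 : ω ^ (i + 1) = c • (ι ℝ η * (ι ℝ a * ω ^ i)) := by
    have h4 : d η • ω ^ (i + 1) = ((i + 1 : ℕ) : ℝ) • (ι ℝ η * (ι ℝ a * ω ^ i)) := by
      rw [h2, ← ha, mul_smul_comm, Nat.cast_smul_eq_nsmul]
    have := congrArg (fun z => (d η)⁻¹ • z) h4
    simpa [smul_smul, inv_mul_cancel₀ hdη, hc] using this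
  have h5 : ω ^ (i + 1 + 1) = c • (ι ℝ η * (ι ℝ a * ω ^ (i + 1))) := by
    rw [pow_succ' ω (i + 1)]
    conv_lhs => rw [h3]
    rw [mul_smul_comm]
    congr 1
    rw [← mul_assoc, comm_iota hω η, mul_assoc, ← mul_assoc ω, comm_iota hω a,
      mul_assoc, ← pow_succ']
  have h6 : ω ^ (i + 1 + 1) = 0 := by
    rw [h5]
    conv_lhs => rw [h3]
    rw [mul_smul_comm, mul_smul_comm, smul_smul, key_zero, smul_zero]
  exact hnd h6

/-- sorted monomials of length `k` -/
def SM {N : ℕ} (b : Module.Basis (Fin N) ℝ M) (k : ℕ) : Set (ExteriorAlgebra ℝ M) :=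
  {x | ∃ l : List (Fin N), l.Pairwise (· < ·) ∧ l.length = k ∧
    x = (l.map fun t => ι ℝ (b t)).prod}

lemma insl {N : ℕ} (b : Module.Basis (Fin N) ℝ M) :
    ∀ (l : List (Fin N)), l.Pairwise (· < ·) → ∀ i : Fin N,
      ι ℝ (b i) * (l.map fun t => ι ℝ (b t)).prod ∈
        Submodule.span ℝ {x : ExteriorAlgebra ℝ M | ∃ m : List (Fin N),
          m.Pairwise (· < ·) ∧ m.length = l.length + 1 ∧
          (∀ a ∈ m, i ≤ a ∨ ∃ cc ∈ l, cc ≤ a) ∧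
          x = (m.map fun t => ι ℝ (b t)).prod}
  | [], _, i => by
      apply Submodule.subset_span
      exact ⟨[i], List.pairwise_singleton _ i, rfl, by simp, by simp⟩
  | (j :: l'), hs, i => by
      rw [List.pairwise_cons] at hs
      obtain ⟨hjl, hl'⟩ := hs
      rcases lt_trichotomy i j with hij | hij | hij
      · apply Submodule.subset_span
        refine ⟨i :: j :: l', ?_, by simp, ?_, by simp [mul_assoc]⟩
        · rw [List.pairwise_cons]
          refine ⟨?_, by rw [List.pairwise_cons]; exact ⟨hjl, hl'⟩⟩
          intro c hc
          rcases List.mem_cons.mp hc with rfl | hc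
          · exact hij
          · exact hij.trans (hjl c hc)
        · intro a ha
          rcases List.mem_cons.mp ha with rfl | ha
          · exact Or.inl le_rfl
          · exact Or.inr ⟨a, ha, le_rfl⟩
      · subst hij
        have hzero : ι ℝ (b i) * ((i :: l').map fun t => ι ℝ (b t)).prod = 0 := by
          rw [List.map_cons, List.prod_cons, ← mul_assoc, ι_sq_zero, zero_mul]
        rw [hzero]
        exact Submodule.zero_mem _
      · have key : ι ℝ (b i) * ((j :: l').map fun t => ι ℝ (b t)).prod
            = -(ι ℝ (b j) * (ι ℝ (b i) * (l'.map fun t => ι ℝ (b t)).prod)) := by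
          rw [List.map_cons, List.prod_cons, ← mul_assoc, anticomm (b i) (b j), neg_mul,
            mul_assoc]
        rw [key]
        apply neg_mem
        refine Submodule.span_induction (p := fun w _ =>
            ι ℝ (b j) * w ∈ Submodule.span ℝ {x : ExteriorAlgebra ℝ M | ∃ m : List (Fin N),
              m.Pairwise (· < ·) ∧ m.length = (j :: l').length + 1 ∧
              (∀ a ∈ m, i ≤ a ∨ ∃ cc ∈ j :: l', cc ≤ a) ∧
              x = (m.map fun t => ι ℝ (b t)).prod})
          ?_ ?_ ?_ ?_ (insl b l' hl' i)
        · rintro _ ⟨m, hm, hlen, hcond, rfl⟩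
          have hja : ∀ a ∈ m, j < a := by
            intro a ha
            rcases hcond a ha with h1 | ⟨cc, hcc, h2⟩
            · exact lt_of_lt_of_le hij h1
            · exact lt_of_lt_of_le (hjl cc hcc) h2
          apply Submodule.subset_span
          refine ⟨j :: m, List.pairwise_cons.mpr ⟨hja, hm⟩, by simp [hlen], ?_, by simp⟩
          intro a ha
          rcases List.mem_cons.mp ha with rfl | ha
          · exact Or.inr ⟨a, List.mem_cons_self, le_rfl⟩
          · exact Or.inr ⟨j, List.mem_cons_self, (hja a ha).le⟩
        · show _ ∈ _
          rw [mul_zero]; exact Submodule.zero_mem _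
        · intro x y _ _ hx hy
          rw [mul_add]; exact add_mem hx hy
        · intro r x _ hx
          rw [mul_smul_comm]; exact Submodule.smul_mem _ _ hx

lemma mul_iota_span {N : ℕ} (b : Module.Basis (Fin N) ℝ M) (k : ℕ) (t : Fin N)
    {x : ExteriorAlgebra ℝ M} (hx : x ∈ Submodule.span ℝ (SM b k)) :
    ι ℝ (b t) * x ∈ Submodule.span ℝ (SM b (k + 1)) := by
  refine Submodule.span_induction (p := fun w _ =>
      ι ℝ (b t) * w ∈ Submodule.span ℝ (SM b (k + 1))) ?_ ?_ ?_ ?_ hx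
  · rintro _ ⟨l, hl, hlen, rfl⟩
    refine Submodule.span_le.mpr ?_ (insl b l hl t)
    rintro _ ⟨m, hm, hmlen, _, rfl⟩
    exact Submodule.subset_span ⟨m, hm, by omega, rfl⟩
  · show _ ∈ _
    rw [mul_zero]; exact Submodule.zero_mem _
  · intro x y _ _ hx hy
    rw [mul_add]; exact add_mem hx hy
  · intro r x _ hx
    rw [mul_smul_comm]; exact Submodule.smul_mem _ _ hx

lemma pow_le_span {N : ℕ} (b : Module.Basis (Fin N) ℝ M) (k : ℕ) :
    (LinearMap.range (ι ℝ : M →ₗ[ℝ] ExteriorAlgebra ℝ M)) ^ k ≤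
      Submodule.span ℝ (SM b k) := by
  intro x hx
  refine Submodule.pow_induction_on_left'
    (M := LinearMap.range (ι ℝ : M →ₗ[ℝ] ExteriorAlgebra ℝ M))
    (C := fun j x _ => x ∈ Submodule.span ℝ (SM b j)) ?_ ?_ ?_ hx
  · intro r
    rw [Algebra.algebraMap_eq_smul_one]
    exact Submodule.smul_mem _ _ (Submodule.subset_span ⟨[], List.Pairwise.nil, rfl, by simp⟩)
  · intro x y i _ _ hx hy
    exact add_mem hx hy
  · rintro _ ⟨v, rfl⟩ i x _ hx
    have hv : (ι ℝ) v = ∑ t : Fin N, b.repr v t • ι ℝ (b t) := by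
      conv_lhs => rw [← Module.Basis.sum_repr b v]
      rw [map_sum]
      simp [map_smul]
    rw [hv, Finset.sum_mul]
    refine Submodule.sum_mem _ fun t _ => ?_
    rw [smul_mul_assoc]
    exact Submodule.smul_mem _ _ (mul_iota_span b i t hx)

lemma sm_subset_range {N : ℕ} (hN : 1 ≤ N) (b : Module.Basis (Fin N) ℝ M) :
    SM b (N - 1) ⊆ Set.range (fun i : Fin N =>
      (((Finset.univ.erase i).sort (· ≤ ·)).map fun t => ι ℝ (b t)).prod) := by
  classical
  rintro _ ⟨l, hl, hlen, rfl⟩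
  have hnd : l.Nodup := hl.nodup
  have hcard : l.toFinset.card = N - 1 := by
    rw [List.card_toFinset, hnd.dedup, hlen]
  have hcompl : (l.toFinsetᶜ : Finset (Fin N)).card = 1 := by
    rw [Finset.card_compl, hcard, Fintype.card_fin]
    omega
  obtain ⟨i, hi⟩ := Finset.card_eq_one.mp hcompl
  have hfin : l.toFinset = Finset.univ.erase i := by
    rw [← Finset.compl_singleton, ← hi, compl_compl]
  haveI : IsAntisymm (Fin N) (· < ·) := ⟨fun a b h h' => absurd h' (asymm h)⟩
  have hperm : l.Perm ((Finset.univ.erase i).sort (· ≤ ·)) :=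
    List.perm_of_nodup_nodup_toFinset_eq hnd (Finset.sort_nodup _ _)
      (by rw [Finset.sort_toFinset, hfin])
  have heq : l = (Finset.univ.erase i).sort (· ≤ ·) :=
    List.Perm.eq_of_pairwise' hl (Finset.sortedLT_sort _).pairwise hperm
  exact ⟨i, by rw [heq]⟩

end Stmt15Aux

theorem stmt_15 {V : Type*} [AddCommGroup V] [Module ℝ V] [FiniteDimensional ℝ V]
    (n : ℕ) (hn : 1 ≤ n) (hdim : Module.finrank ℝ V = 2 * n)
    (ω : ExteriorAlgebra ℝ (Module.Dual ℝ V))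
    (hω2 : ω ∈ ⋀[ℝ]^2 (Module.Dual ℝ V))
    (hnd : ω ^ n ≠ 0) :
    Function.Injective
        ((LinearMap.mulRight ℝ (ω ^ (n - 1))).comp
          (ι ℝ : Module.Dual ℝ V →ₗ[ℝ] ExteriorAlgebra ℝ (Module.Dual ℝ V))) ∧
      LinearMap.range
          ((LinearMap.mulRight ℝ (ω ^ (n - 1))).comp
            (ι ℝ : Module.Dual ℝ V →ₗ[ℝ] ExteriorAlgebra ℝ (Module.Dual ℝ V))) =
        ⋀[ℝ]^(2 * n - 1) (Module.Dual ℝ V) := by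
  classical
  have hdD : Module.finrank ℝ (Module.Dual ℝ V) = 2 * n := by
    rw [Subspace.dual_finrank_eq, hdim]
  let b : Module.Basis (Fin (2 * n)) ℝ (Module.Dual ℝ V) :=
    Module.finBasisOfFinrankEq ℝ (Module.Dual ℝ V) hdD
  set L := (LinearMap.mulRight ℝ (ω ^ (n - 1))).comp
      (ι ℝ : Module.Dual ℝ V →ₗ[ℝ] ExteriorAlgebra ℝ (Module.Dual ℝ V)) with hL
  have hLapp : ∀ η : Module.Dual ℝ V, L η = ι ℝ η * ω ^ (n - 1) := fun η => rfl
  have hinj : Function.Injective L := by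
    rw [← LinearMap.ker_eq_bot, LinearMap.ker_eq_bot']
    intro η hη
    by_contra hne
    obtain ⟨v, hv⟩ : ∃ v, η v ≠ 0 := by
      by_contra hall
      push_neg at hall
      exact hne (LinearMap.ext fun v => hall v)
    refine Stmt15Aux.core hn ω hω2 hnd η (Module.Dual.eval ℝ V v) (by simpa using hv) ?_
    rw [← hLapp]
    exact hη
  have hle : LinearMap.range L ≤ ⋀[ℝ]^(2 * n - 1) (Module.Dual ℝ V) := by
    rintro _ ⟨η, rfl⟩
    have h1 : ι ℝ η ∈ LinearMap.range
        (ι ℝ : Module.Dual ℝ V →ₗ[ℝ] ExteriorAlgebra ℝ (Module.Dual ℝ V)) := ⟨η, rfl⟩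
    have h2 : ∀ m : ℕ, ω ^ m ∈ (LinearMap.range
        (ι ℝ : Module.Dual ℝ V →ₗ[ℝ] ExteriorAlgebra ℝ (Module.Dual ℝ V))) ^ (2 * m) := by
      intro m
      induction m with
      | zero =>
        simpa using Submodule.mem_one.mpr ⟨1, map_one _⟩
      | succ m ih =>
        have harith : 2 * (m + 1) = 2 + 2 * m := by ring
        rw [harith, pow_add, pow_succ' ω m]
        exact Submodule.mul_mem_mul hω2 ih
    have h3 := Submodule.mul_mem_mul h1 (h2 (n - 1))
    rw [← pow_succ' (LinearMap.range
      (ι ℝ : Module.Dual ℝ V →ₗ[ℝ] ExteriorAlgebra ℝ (Module.Dual ℝ V))) (2 * (n - 1))] at h3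
    have harith : 2 * n - 1 = 2 * (n - 1) + 1 := by omega
    rw [harith]
    exact h3
  set h : Fin (2 * n) → ExteriorAlgebra ℝ (Module.Dual ℝ V) := fun i =>
    (((Finset.univ.erase i).sort (· ≤ ·)).map fun t => ι ℝ (b t)).prod with hh
  have hspan : ⋀[ℝ]^(2 * n - 1) (Module.Dual ℝ V) ≤ Submodule.span ℝ (Set.range h) := by
    refine (Stmt15Aux.pow_le_span b (2 * n - 1)).trans (Submodule.span_mono ?_)
    exact Stmt15Aux.sm_subset_range (by omega) b
  haveI hfd : FiniteDimensional ℝ (Submodule.span ℝ (Set.range h)) :=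
    FiniteDimensional.span_of_finite ℝ (Set.finite_range h)
  haveI : FiniteDimensional ℝ (⋀[ℝ]^(2 * n - 1) (Module.Dual ℝ V) :
      Submodule ℝ (ExteriorAlgebra ℝ (Module.Dual ℝ V))) :=
    Submodule.finiteDimensional_of_le hspan
  have hcard : Module.finrank ℝ (Submodule.span ℝ (Set.range h)) ≤ 2 * n := by
    refine (finrank_span_le_card (R := ℝ) (Set.range h)).trans ?_
    rw [Set.toFinset_range]
    exact Finset.card_image_le.trans (by simp)
  have hfr1 : Module.finrank ℝ (⋀[ℝ]^(2 * n - 1) (Module.Dual ℝ V) :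
      Submodule ℝ (ExteriorAlgebra ℝ (Module.Dual ℝ V))) ≤ 2 * n :=
    (Submodule.finrank_mono hspan).trans hcard
  have hfr2 : Module.finrank ℝ (LinearMap.range L) = 2 * n := by
    rw [LinearMap.finrank_range_of_inj hinj, hdD]
  exact ⟨hinj, Submodule.eq_of_le_of_finrank_le hle (by rw [hfr2]; exact hfr1)⟩
end
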